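/- Let t > 0 and let (r(n)) be a sequence of nonnegative integers with r(n)/√n → t as n → ∞. Place r = r(n) distinguishable rooks independently and uniformly at random on B_n. Then the expected numbers of attacks satisfy E(W_RR + W_CC) → (4/3)t² and E(W_CC) → (2/3)t² as n → ∞. -/

import Mathlib

open Finset Filter

/-- The triangular board `B_n = {(i,j) : 1 ≤ i < j ≤ n}`. -/
def board (n : ℕ) : Finset (ℕ × ℕ) :=
  (Finset.range (n + 1) ×ˢ Finset.range (n + 1)).filter fun p => 1 ≤ p.1 ∧ p.1 < p.2

/-- Expectation of an `ℕ`-valued statistic of a uniform random placement of `r` rooks on `B_n`;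
a placement is a function `Fin r → ℕ × ℕ`, rook `a` sitting on the square `f a = (row, column)`. -/
noncomputable def rookExp (n r : ℕ) (W : (Fin r → ℕ × ℕ) → ℕ) : ℝ :=
  (∑ f ∈ Fintype.piFinset (fun _ : Fin r => board n), (W f : ℝ)) / ((board n).card : ℝ) ^ r

/-- Number of (unordered) pairs of rooks lying in the same row. -/
def WRR (r : ℕ) (f : Fin r → ℕ × ℕ) : ℕ :=
  (Finset.univ.filter fun p : Fin r × Fin r => p.1 < p.2 ∧ (f p.1).1 = (f p.2).1).card

/-- Number of (unordered) pairs of rooks lying in the same column. -/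
def WCC (r : ℕ) (f : Fin r → ℕ × ℕ) : ℕ :=
  (Finset.univ.filter fun p : Fin r × Fin r => p.1 < p.2 ∧ (f p.1).2 = (f p.2).2).card

/-!
By linearity, `E(W_CC)` is `C(r,2)` times the probability that two given rooks share a column.
Distinct rooks occupy independent uniform squares, so this probability is `∑ⱼ cⱼ² / |B_n|²`, where
`cⱼ` is the number of squares in column `j`. Both the columns and the rows of `B_n` have sizes
`0, 1, …, n - 1`, so `E(W_CC) = E(W_RR) = r(r-1)(2n-1) / (3n(n-1))`, which behaves like
`(2/3) (r/√n)²`.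
-/

theorem Fin.card_filter_fst_lt_snd (r : ℕ) : #{p : Fin r × Fin r | p.1 < p.2} = r.choose 2 := by
  rw [card_filter, Fintype.sum_prod_type_right]
  simp_rw [← card_filter, Finset.filter_gt_eq_Iio, Fin.card_Iio]
  rw [Fin.sum_univ_eq_sum_range (fun i ↦ i) r, sum_range_id, Nat.choose_two_right]

section Placements

variable {ι α β : Type*} [DecidableEq β] {s : Finset α} {t : Finset β} {π : α → β}

namespace Fintype

variable [Fintype ι] [DecidableEq ι] {a b : ι}

theorem prod_eq_mul_mul_pow_of_ne {M : Type*} [CommMonoid M] (hab : a ≠ b) {v : ι → M} {z : M}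
    (hv : ∀ i, i ≠ a → i ≠ b → v i = z) : ∏ i, v i = v a * v b * z ^ (card ι - 2) := by
  have hb : b ∈ univ.erase a := mem_erase.2 ⟨hab.symm, mem_univ b⟩
  rw [← mul_prod_erase univ v (mem_univ a), ← mul_prod_erase _ v hb, ← mul_assoc,
    Finset.prod_congr rfl fun i hi ↦ hv i (ne_of_mem_erase (mem_of_mem_erase hi))
      (ne_of_mem_erase hi),
    prod_const, card_erase_of_mem hb, card_erase_of_mem (mem_univ a), card_univ, Nat.sub_sub]

theorem sum_piFinset_apply_mul_apply {R : Type*} [CommSemiring R] (hab : a ≠ b) (s : Finset α)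
    (g h : α → R) :
    ∑ f ∈ piFinset fun _ : ι ↦ s, g (f a) * h (f b)
      = (∑ x ∈ s, g x) * (∑ x ∈ s, h x) * #s ^ (card ι - 2) := by
  set k : ι → α → R := fun i x ↦ if i = a then g x else if i = b then h x else 1
  have hk : ∀ f : ι → α, ∏ i, k i (f i) = g (f a) * h (f b) := fun f ↦ by
    rw [prod_eq_mul_mul_pow_of_ne hab (z := 1) fun i hia hib ↦ by simp [k, hia, hib]]
    simp [k, hab.symm]
  simp_rw [← hk]
  rw [sum_prod_piFinset, prod_eq_mul_mul_pow_of_ne hab (z := (#s : R))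
    fun i hia hib ↦ by simp [k, hia, hib]]
  simp [k, hab.symm]

theorem card_piFinset_filter_apply_eq (hπ : ∀ x ∈ s, π x ∈ t) (hab : a ≠ b) :
    #{f ∈ piFinset fun _ : ι ↦ s | π (f a) = π (f b)}
      = (∑ j ∈ t, #{x ∈ s | π x = j} ^ 2) * #s ^ (card ι - 2) := by
  have hsplit : ∀ f ∈ piFinset fun _ : ι ↦ s, (if π (f a) = π (f b) then 1 else 0)
      = ∑ j ∈ t, (if π (f a) = j then 1 else 0) * (if π (f b) = j then 1 else 0) := by
    intro f hf
    simp_rw [ite_zero_mul, one_mul]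
    rw [Finset.sum_ite_eq, if_pos (hπ _ (mem_piFinset.1 hf a))]
    exact if_congr eq_comm rfl rfl
  rw [card_filter, Finset.sum_congr rfl hsplit, Finset.sum_comm, Finset.sum_mul]
  refine Finset.sum_congr rfl fun j _ ↦ ?_
  have hj := sum_piFinset_apply_mul_apply hab s (fun x ↦ if π x = j then 1 else 0)
    (fun x ↦ if π x = j then 1 else 0)
  rwa [← card_filter, ← sq] at hj

end Fintype

theorem sum_card_filter_lt_and_apply_eq (hπ : ∀ x ∈ s, π x ∈ t) (r : ℕ) :
    ∑ f ∈ Fintype.piFinset fun _ : Fin r ↦ s,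
        #{p : Fin r × Fin r | p.1 < p.2 ∧ π (f p.1) = π (f p.2)}
      = r.choose 2 * ((∑ j ∈ t, #{x ∈ s | π x = j} ^ 2) * #s ^ (r - 2)) := by
  simp_rw [← filter_filter]
  conv_lhs => enter [2, f]; rw [card_filter]
  rw [sum_comm, ← Fin.card_filter_fst_lt_snd, card_eq_sum_ones, sum_mul]
  refine sum_congr rfl fun p hp ↦ ?_
  rw [← card_filter, Fintype.card_piFinset_filter_apply_eq hπ (mem_filter.1 hp).2.ne,
    Fintype.card_fin, one_mul]

end Placements

theorem sum_range_sq_eq (n : ℕ) : ∑ k ∈ range n, (k : ℝ) ^ 2 = n * (n - 1) * (2 * n - 1) / 6 := by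
  induction n with
  | zero => simp
  | succ n ih => rw [sum_range_succ, ih]; push_cast; ring

theorem mem_board {n : ℕ} {p : ℕ × ℕ} : p ∈ board n ↔ 1 ≤ p.1 ∧ p.1 < p.2 ∧ p.2 ≤ n := by
  simp only [board, mem_filter, mem_product, mem_range]
  omega

theorem card_board_filter_snd_eq {n j : ℕ} (hj : j ≤ n) : #{p ∈ board n | p.2 = j} = j - 1 := by
  rw [show {p ∈ board n | p.2 = j} = Ico 1 j ×ˢ {j} by
      ext ⟨i, k⟩
      simp only [mem_filter, mem_board, mem_product, mem_Ico, mem_singleton]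
      omega,
    card_product, Nat.card_Ico, card_singleton, mul_one]

theorem card_board_filter_fst_eq {n i : ℕ} (hi : 1 ≤ i) : #{p ∈ board n | p.1 = i} = n - i := by
  rw [show {p ∈ board n | p.1 = i} = {i} ×ˢ Ioc i n by
      ext ⟨i', k⟩
      simp only [mem_filter, mem_board, mem_product, mem_Ioc, mem_singleton]
      omega,
    card_product, Nat.card_Ioc, card_singleton, one_mul]

theorem card_board (n : ℕ) : #(board n) = n.choose 2 := by
  rw [card_eq_sum_card_fiberwise (f := Prod.snd) (t := range (n + 1))
      fun p hp ↦ mem_range_succ_iff.2 (mem_board.1 hp).2.2,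
    sum_congr rfl fun j hj ↦ card_board_filter_snd_eq (mem_range_succ_iff.1 hj),
    sum_range_succ']
  simp only [Nat.add_sub_cancel, Nat.zero_sub, add_zero]
  rw [sum_range_id, Nat.choose_two_right]

theorem sum_sq_card_board_filter_snd (n : ℕ) :
    ∑ j ∈ range (n + 1), #{p ∈ board n | p.2 = j} ^ 2 = ∑ k ∈ range n, k ^ 2 := by
  rw [sum_range_succ', card_board_filter_snd_eq n.zero_le, zero_tsub, sq 0, mul_zero, add_zero]
  exact sum_congr rfl fun k hk ↦ by
    rw [card_board_filter_snd_eq (mem_range.1 hk), Nat.succ_sub_one]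

theorem sum_sq_card_board_filter_fst (n : ℕ) :
    ∑ i ∈ range (n + 1), #{p ∈ board n | p.1 = i} ^ 2 = ∑ k ∈ range n, k ^ 2 := by
  have hzero : {p ∈ board n | p.1 = 0} = ∅ :=
    filter_false_of_mem fun p hp ↦ (Nat.one_le_iff_ne_zero.1 (mem_board.1 hp).1)
  rw [sum_range_succ', hzero, card_empty, sq 0, mul_zero, add_zero,
    ← sum_range_reflect (fun k ↦ k ^ 2)]
  exact sum_congr rfl fun i _ ↦ by
    rw [card_board_filter_fst_eq (Nat.succ_pos i), Nat.sub_sub, add_comm 1]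

theorem rookExp_add (n r : ℕ) (W V : (Fin r → ℕ × ℕ) → ℕ) :
    rookExp n r (fun f ↦ W f + V f) = rookExp n r W + rookExp n r V := by
  simp only [rookExp, Nat.cast_add, sum_add_distrib, add_div]

noncomputable def sameLineMean (n r : ℕ) : ℝ := r * (r - 1) * (2 * n - 1) / (3 * n * (n - 1))

theorem rookExp_card_filter_lt_and_apply_eq {n : ℕ} (hn : 2 ≤ n) (r : ℕ) {π : ℕ × ℕ → ℕ}
    (hπ : ∀ p ∈ board n, π p ∈ range (n + 1))
    (hsq : ∑ j ∈ range (n + 1), #{p ∈ board n | π p = j} ^ 2 = ∑ k ∈ range n, k ^ 2) :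
    rookExp n r (fun f ↦ #{p : Fin r × Fin r | p.1 < p.2 ∧ π (f p.1) = π (f p.2)})
      = sameLineMean n r := by
  have hn' : (2 : ℝ) ≤ n := by exact_mod_cast hn
  have hN : ((n.choose 2 : ℕ) : ℝ) ≠ 0 := by rw [Nat.cast_choose_two]; nlinarith
  have hpow : ((r.choose 2 : ℕ) : ℝ) * (n.choose 2 : ℕ) ^ (r - 2) * (n.choose 2 : ℕ) ^ 2
      = (r.choose 2 : ℕ) * (n.choose 2 : ℕ) ^ r := by
    rcases lt_or_ge r 2 with hr | hr
    · simp [Nat.choose_eq_zero_of_lt hr]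
    · rw [mul_assoc, ← pow_add, Nat.sub_add_cancel hr]
  rw [rookExp, ← Nat.cast_sum, sum_card_filter_lt_and_apply_eq hπ, hsq, card_board,
    div_eq_iff (pow_ne_zero _ hN)]
  have hmean : sameLineMean n r
      = (r.choose 2 : ℕ) * (∑ k ∈ range n, (k : ℝ) ^ 2) / ((n.choose 2 : ℕ) : ℝ) ^ 2 := by
    have h1 : (n : ℝ) - 1 ≠ 0 := by linarith
    rw [sameLineMean, sum_range_sq_eq, Nat.cast_choose_two, Nat.cast_choose_two]
    field_simp
    ring
  rw [hmean, div_mul_eq_mul_div, eq_div_iff (pow_ne_zero 2 hN)]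
  push_cast
  linear_combination (∑ k ∈ range n, (k : ℝ) ^ 2) * hpow

theorem rookExp_WCC {n : ℕ} (hn : 2 ≤ n) (r : ℕ) : rookExp n r (WCC r) = sameLineMean n r :=
  rookExp_card_filter_lt_and_apply_eq hn r (fun _ hp ↦ mem_range_succ_iff.2 (mem_board.1 hp).2.2)
    (sum_sq_card_board_filter_snd n)

theorem rookExp_WRR {n : ℕ} (hn : 2 ≤ n) (r : ℕ) : rookExp n r (WRR r) = sameLineMean n r :=
  rookExp_card_filter_lt_and_apply_eq hn r
    (fun _ hp ↦ mem_range_succ_iff.2 (by have := mem_board.1 hp; omega))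
    (sum_sq_card_board_filter_fst n)

theorem tendsto_sameLineMean {t : ℝ} {r : ℕ → ℕ}
    (hlim : Tendsto (fun n : ℕ ↦ (r n : ℝ) / Real.sqrt n) atTop (nhds t)) :
    Tendsto (fun n ↦ sameLineMean n (r n)) atTop (nhds (2 / 3 * t ^ 2)) := by
  have hsqrt : Tendsto (fun n : ℕ ↦ 1 / Real.sqrt n) atTop (nhds 0) := by
    simpa only [one_div, Function.comp_def] using tendsto_inv_atTop_zero.comp
      (Real.tendsto_sqrt_atTop.comp tendsto_natCast_atTop_atTop)
  have hpred : Tendsto (fun n : ℕ ↦ 1 / ((n : ℝ) - 1)) atTop (nhds 0) := by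
    simpa only [one_div, Function.comp_def, sub_eq_add_neg] using tendsto_inv_atTop_zero.comp
      (tendsto_atTop_add_const_right _ (-1) tendsto_natCast_atTop_atTop)
  have hprod := (hlim.mul (hlim.sub hsqrt)).mul (hpred.const_mul (1 / 3) |>.const_add (2 / 3))
  rw [sub_zero, mul_zero, add_zero, ← sq, mul_comm] at hprod
  refine hprod.congr' ((eventually_ge_atTop 2).mono fun n hn ↦ ?_)
  have hn' : (2 : ℝ) ≤ n := by exact_mod_cast hn
  have h1 : (n : ℝ) - 1 ≠ 0 := by linarith
  have hs : Real.sqrt n ≠ 0 := by positivity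
  dsimp only [sameLineMean]
  rw [← sub_div]
  field_simp
  rw [Real.sq_sqrt n.cast_nonneg]
  ring

theorem expected_attacks_limits_general (t : ℝ) (r : ℕ → ℕ)
    (hlim : Tendsto (fun n : ℕ => (r n : ℝ) / Real.sqrt n) atTop (nhds t)) :
    Tendsto (fun n : ℕ => rookExp n (r n) (fun f => WRR (r n) f + WCC (r n) f))
        atTop (nhds ((4/3) * t ^ 2)) ∧
    Tendsto (fun n : ℕ => rookExp n (r n) (WCC (r n)))
        atTop (nhds ((2/3) * t ^ 2)) := by
  have hRR : Tendsto (fun n : ℕ ↦ rookExp n (r n) (WRR (r n))) atTop (nhds (2 / 3 * t ^ 2)) :=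
    (tendsto_sameLineMean hlim).congr'
      ((eventually_ge_atTop 2).mono fun n hn ↦ (rookExp_WRR hn _).symm)
  have hCC : Tendsto (fun n : ℕ ↦ rookExp n (r n) (WCC (r n))) atTop (nhds (2 / 3 * t ^ 2)) :=
    (tendsto_sameLineMean hlim).congr'
      ((eventually_ge_atTop 2).mono fun n hn ↦ (rookExp_WCC hn _).symm)
  refine ⟨?_, hCC⟩
  rw [show 4 / 3 * t ^ 2 = 2 / 3 * t ^ 2 + 2 / 3 * t ^ 2 by ring]
  simpa only [rookExp_add] using hRR.add hCC

/-- if `r(n)/√n → t > 0` and `r(n)` rooks are placed independently and uniformly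
at random on `B_n`, then the expected numbers of attacks satisfy
`E(W_RR + W_CC) → (4/3)t²` and `E(W_CC) → (2/3)t²` as `n → ∞`. -/
theorem expected_attacks_limits (t : ℝ) (ht : 0 < t) (r : ℕ → ℕ)
    (hlim : Tendsto (fun n : ℕ => (r n : ℝ) / Real.sqrt n) atTop (nhds t)) :
    Tendsto (fun n : ℕ => rookExp n (r n) (fun f => WRR (r n) f + WCC (r n) f))
        atTop (nhds ((4/3) * t ^ 2)) ∧
    Tendsto (fun n : ℕ => rookExp n (r n) (WCC (r n)))
        atTop (nhds ((2/3) * t ^ 2)) :=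
  expected_attacks_limits_general t r hlim
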